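/- arXiv:0709.1059 — 3 statements merged into one kernel-verified Lean document; each statement's English description precedes it below -/
import Mathlib

section
/- For every integer n ≥ 4, C(n) < 1/(3n), where C(n) = -min_{x>0} (x(1+x)^{n-1} - 2x) = max_{x ∈ [0, 2^{1/(n-1)}-1]} (2x - x(1+x)^{n-1}). -/
/-- Bernoulli inequality of degree 2. -/
lemma bern2 (m : ℕ) (x : ℝ) (hx : 0 ≤ x) :
    1 + m * x + m * (m - 1) / 2 * x ^ 2 ≤ (1 + x) ^ m := by
  induction m with
  | zero => norm_num
  | succ k ih =>
    have h1 : (1 + x) ^ (k + 1) = (1 + x) ^ k * (1 + x) := by ring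
    have hk : (0 : ℝ) ≤ (k : ℝ) * ((k : ℝ) - 1) := by
      rcases k with _ | k'
      · norm_num
      · push_cast
        nlinarith [Nat.cast_nonneg (α := ℝ) k']
    have h2 := mul_le_mul_of_nonneg_right ih (by linarith : (0:ℝ) ≤ 1 + x)
    push_cast
    push_cast at h2
    nlinarith [mul_nonneg hk (mul_nonneg hx (mul_nonneg hx hx))]

theorem C_n_lt (n : ℕ) (hn : 4 ≤ n) :
    sSup ((fun x : ℝ => 2 * x - x * (1 + x) ^ (n - 1)) ''
        Set.Icc 0 ((2 : ℝ) ^ (((n : ℝ) - 1)⁻¹) - 1)) < 1 / (3 * n) := by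
  set m : ℕ := n - 1 with hmdef
  have hm3 : 3 ≤ m := by omega
  have hnm : n = m + 1 := by omega
  have hmR : (3 : ℝ) ≤ (m : ℝ) := by exact_mod_cast hm3
  have hmpos : (0 : ℝ) < m := by linarith
  have hm1 : (0 : ℝ) ≤ (m : ℝ) - 1 := by linarith
  -- the uniform bound B
  set B : ℝ := 1 / (4 * m) - ((m : ℝ) - 1) / (128 * m ^ 2) with hB
  have eB : B = (31 * (m : ℝ) + 1) / (128 * m ^ 2) := by
    rw [hB]; field_simp; ring
  have hB0 : 0 ≤ B := by rw [eB]; positivity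
  -- pointwise bound
  have hpt : ∀ x : ℝ, 0 ≤ x → 2 * x - x * (1 + x) ^ m ≤ B := by
    intro x hx
    have hb := bern2 m x hx
    have key : 2 * x - x * (1 + x) ^ m ≤ x - m * x ^ 2 - m * (m - 1) / 2 * x ^ 3 := by
      nlinarith [mul_le_mul_of_nonneg_left hb hx]
    have hc : (0 : ℝ) < 4 * m := by linarith
    have hcoef : (0 : ℝ) ≤ (m : ℝ) * ((m : ℝ) - 1) / 2 :=
      div_nonneg (mul_nonneg hmpos.le hm1) (by norm_num)
    rcases le_or_gt x (1 / (4 * m)) with h | h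
    · -- small x : quadratic deficit
      have h1 : 4 * (m : ℝ) * x ≤ 1 := by
        rw [le_div_iff₀ hc] at h; linarith
      have hcube : (0 : ℝ) ≤ (m : ℝ) * ((m : ℝ) - 1) / 2 * x ^ 3 :=
        mul_nonneg hcoef (pow_nonneg hx 3)
      have h2 : x - m * x ^ 2 ≤ 1 / (4 * m) - 1 / (16 * m) := by
        have e : (1 : ℝ) / (16 * m) + x - (1 / (4 * m) + m * x ^ 2) =
            -((1 - 4 * m * x) * (3 - 4 * m * x) / (16 * m)) := by
          field_simp; ring
        have hnn : 0 ≤ (1 - 4 * (m : ℝ) * x) * (3 - 4 * m * x) / (16 * m) :=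
          div_nonneg (mul_nonneg (by linarith) (by linarith)) (by linarith)
        linarith
      have h3 : ((m : ℝ) - 1) / (128 * m ^ 2) ≤ 1 / (16 * (m : ℝ)) := by
        rw [div_le_div_iff₀ (by positivity) (by positivity)]
        nlinarith
      rw [hB]; linarith
    · -- large x : cubic deficit
      have h1 : (1 / (4 * (m : ℝ))) ^ 3 ≤ x ^ 3 :=
        pow_le_pow_left₀ (by positivity) (le_of_lt h) 3
      have h2 : x - m * x ^ 2 ≤ 1 / (4 * m) := by
        rw [le_div_iff₀ hc]
        nlinarith [sq_nonneg (2 * (m : ℝ) * x - 1)]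
      have h3 : (m : ℝ) * ((m : ℝ) - 1) / 2 * (1 / (4 * m)) ^ 3 = ((m : ℝ) - 1) / (128 * m ^ 2) := by
        field_simp; ring
      have h4 : ((m : ℝ) - 1) / (128 * m ^ 2) ≤ m * ((m : ℝ) - 1) / 2 * x ^ 3 := by
        rw [← h3]
        exact mul_le_mul_of_nonneg_left h1 hcoef
      rw [hB]; linarith
  -- B < 1/(3n)
  have hBlt : B < 1 / (3 * n) := by
    rw [eB, hnm]
    push_cast
    rw [div_lt_div_iff₀ (by positivity) (by positivity)]
    nlinarith
  have hle : sSup ((fun x : ℝ => 2 * x - x * (1 + x) ^ (n - 1)) ''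
      Set.Icc 0 ((2 : ℝ) ^ (((n : ℝ) - 1)⁻¹) - 1)) ≤ B := by
    apply Real.sSup_le _ hB0
    rintro y ⟨x, hxmem, rfl⟩
    simpa [hmdef] using hpt x hxmem.1
  exact lt_of_le_of_lt hle hBlt
end

section
/- For every integer n ≥ 2 and every x > 0, f_n(x) ≤ f_{n+1}(x), where f_n(x) = (Σ_{j=1}^{n-1} ((n-j)/(j!·n))·x^{j+1}) - x. -/
noncomputable def f (n : ℕ) (x : ℝ) : ℝ :=
  (∑ j ∈ Finset.Icc 1 (n - 1), ((n : ℝ) - (j : ℝ)) / ((j.factorial : ℝ) * n) * x ^ (j + 1)) - x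

/-!
The coefficient `(n - j) / (j! n) = (1 - j / n) / j!` of `x ^ (j + 1)` increases with `n`, and
passing from `n` to `n + 1` only adds the nonnegative term `j = n`; for `x > 0` all powers are
positive, so the sum increases termwise.
-/

open Finset

lemma sub_div_mul_le_add_one_sub_div_mul {n a c : ℝ} (hn : 0 < n) (ha : 0 ≤ a) (hc : 0 < c) :
    (n - a) / (c * n) ≤ (n + 1 - a) / (c * (n + 1)) := by
  rw [div_le_div_iff₀ (by positivity) (by positivity)]
  nlinarith [mul_nonneg hc.le ha]

theorem f_monotone_in_n_general (n : ℕ) (x : ℝ) (hx : 0 < x) :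
    f n x ≤ f (n + 1) x := by
  unfold f
  rw [Nat.add_sub_cancel]
  gcongr ?_ - x
  calc _ ≤ ∑ j ∈ Icc 1 (n - 1), ((n + 1 : ℝ) - j) / (j.factorial * (n + 1)) * x ^ (j + 1) := by
        refine sum_le_sum fun j hj => ?_
        obtain ⟨hj_pos, hj_lt⟩ := mem_Icc.mp hj
        have hn : (0 : ℝ) < n := by exact_mod_cast (show 0 < n by omega)
        gcongr ?_ * _
        exact sub_div_mul_le_add_one_sub_div_mul hn j.cast_nonneg (by positivity)
    _ ≤ ∑ j ∈ Icc 1 n, ((n + 1 : ℝ) - j) / (j.factorial * (n + 1)) * x ^ (j + 1) := by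
        refine sum_le_sum_of_subset_of_nonneg (Icc_subset_Icc_right (Nat.sub_le n 1)) ?_
        intro j hj _
        have hjn : (j : ℝ) ≤ n := by exact_mod_cast (mem_Icc.mp hj).2
        have : (0 : ℝ) ≤ n + 1 - j := by linarith
        positivity
    _ = _ := by push_cast; rfl

theorem f_monotone_in_n (n : ℕ) (hn : 2 ≤ n) (x : ℝ) (hx : 0 < x) :
    f n x ≤ f (n + 1) x :=
  f_monotone_in_n_general n x hx
end

section
/- For integers n ≥ 4, C(n) ≤ C(4), where C(n) = -min_{x>0} f_n(x) and f_n(x) = (Σ_{j=1}^{n-1} ((n-j)/(j!·n))·x^{j+1}) - x; moreover C(4) < 0.28. -/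
noncomputable def C (n : ℕ) : ℝ := -sInf ((fun x => f n x) '' Set.Ioi (0 : ℝ))

/-!
Writing the coefficient of `x ^ (j + 1)` in `f n` as `(1 - j / n) / j!` shows that it grows with
`n`, and new nonnegative terms appear as `n` grows, so `f m ≤ f n` on `x ≥ 0` whenever `m ≤ n`.
Hence the minima `-C n` increase with `n` (they exist for `n ≥ 2` since `f n ≥ f 2 = x²/2 - x`),
and `C 4 < 0.28` is an explicit sum-of-squares bound `f 4 ≥ -0.2799` for a quartic.
-/

open Finset Set

lemma f_coeff_le_of_le {m n j : ℕ} (hm : 0 < m) (hmn : m ≤ n) :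
    ((m : ℝ) - j) / (j.factorial * m) ≤ ((n : ℝ) - j) / (j.factorial * n) := by
  have hm' : (0 : ℝ) < m := by exact_mod_cast hm
  have hn' : (0 : ℝ) < n := by exact_mod_cast hm.trans_le hmn
  have hmn' : (m : ℝ) ≤ n := by exact_mod_cast hmn
  have hfac : (0 : ℝ) < j.factorial := by exact_mod_cast j.factorial_pos
  rw [div_le_div_iff₀ (by positivity) (by positivity)]
  nlinarith [mul_le_mul_of_nonneg_left hmn' (mul_nonneg hfac.le j.cast_nonneg)]

lemma f_le_f_of_le {m n : ℕ} (hmn : m ≤ n) {x : ℝ} (hx : 0 ≤ x) : f m x ≤ f n x := by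
  unfold f
  gcongr ?_ - x
  calc ∑ j ∈ Icc 1 (m - 1), ((m : ℝ) - j) / (j.factorial * m) * x ^ (j + 1)
      ≤ ∑ j ∈ Icc 1 (m - 1), ((n : ℝ) - j) / (j.factorial * n) * x ^ (j + 1) := by
        refine sum_le_sum fun j hj => mul_le_mul_of_nonneg_right ?_ (by positivity)
        exact f_coeff_le_of_le (by simp at hj; omega) hmn
    _ ≤ ∑ j ∈ Icc 1 (n - 1), ((n : ℝ) - j) / (j.factorial * n) * x ^ (j + 1) := by
        refine sum_le_sum_of_subset_of_nonneg (Icc_subset_Icc_right (by omega)) ?_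
        intro j hj _
        have hjn : (j : ℝ) ≤ n := by exact_mod_cast (by simp at hj; omega : j ≤ n)
        have : (0 : ℝ) ≤ n - j := by linarith
        positivity

lemma f_two (x : ℝ) : f 2 x = x ^ 2 / 2 - x := by
  norm_num [f, div_eq_inv_mul]

lemma f_four (x : ℝ) : f 4 x = x ^ 4 / 24 + x ^ 3 / 4 + 3 * x ^ 2 / 4 - x := by
  rw [f, show 4 - 1 = 3 from rfl, sum_Icc_succ_top (by norm_num), sum_Icc_succ_top (by norm_num),
    Finset.Icc_self, sum_singleton]
  norm_num [Nat.factorial]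
  ring

lemma bddBelow_f {n : ℕ} (hn : 2 ≤ n) : BddBelow ((fun x => f n x) '' Ioi 0) := by
  refine ⟨-1 / 2, ?_⟩
  rintro _ ⟨x, hx, rfl⟩
  have := f_le_f_of_le hn hx.le
  rw [f_two] at this
  nlinarith [sq_nonneg (x - 1)]

lemma C_antitoneOn : AntitoneOn C (Ici 2) := by
  intro m hm n _ hmn
  refine neg_le_neg (le_csInf (Nonempty.image _ nonempty_Ioi) ?_)
  rintro _ ⟨x, hx, rfl⟩
  exact (csInf_le (bddBelow_f hm) ⟨x, hx, rfl⟩).trans (f_le_f_of_le hmn hx.le)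

lemma f_four_ge (x : ℝ) : -0.2799 ≤ f 4 x := by
  rw [f_four]
  -- `0.5174` approximates the minimiser of `f 4`
  nlinarith [sq_nonneg (x - 0.5174), sq_nonneg (x * (x - 0.5174))]

lemma C_four_lt : C 4 < 0.28 := by
  have : (-0.2799 : ℝ) ≤ sInf ((fun x => f 4 x) '' Ioi 0) := by
    refine le_csInf (Nonempty.image _ nonempty_Ioi) ?_
    rintro _ ⟨x, -, rfl⟩
    exact f_four_ge x
  rw [C]
  linarith

theorem C_nonincreasing_and_C4_bound :
    (∀ n : ℕ, 4 ≤ n → C n ≤ C 4) ∧ C 4 < 0.28 :=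
  ⟨fun n hn => C_antitoneOn (by norm_num) (by simp; omega) hn, C_four_lt⟩
end
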